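/- For every v ∈ (0,1] there exists a measurable m : Ω → [0,1] with ‖m‖₁ = v such that the set of volumes maximizing d_m equals [v², 1]; in particular the lower bound ‖m‖₁² on Dice-optimal volume is sharp and the upper bound 1 is attained. One such example has quantile function F_m⁻¹(u) = (1-v)/(1-v²) · 1{u > v²}. -/

import Mathlib

open MeasureTheory Set

noncomputable section

/-- Normalized Lebesgue measure on the unit cube `[0,1]^n`. -/
def cubeMeasure (n : ℕ) : Measure (Fin n → ℝ) :=
  volume.restrict (Set.univ.pi fun _ => Set.Icc (0:ℝ) 1)

/-- A segmentation: a measurable `{0,1}`-valued function on the cube. -/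
def IsSeg {n : ℕ} (s : (Fin n → ℝ) → ℝ) : Prop :=
  Measurable s ∧ ∀ ω, s ω = 0 ∨ s ω = 1

/-- A marginal function: a measurable `[0,1]`-valued function on the cube. -/
def IsMarg {n : ℕ} (m : (Fin n → ℝ) → ℝ) : Prop :=
  Measurable m ∧ ∀ ω, m ω ∈ Set.Icc (0:ℝ) 1

/-- The volume `‖f‖₁ = ∫ f dλ` (for nonnegative `f`). -/
def vol {n : ℕ} (f : (Fin n → ℝ) → ℝ) : ℝ := ∫ ω, f ω ∂(cubeMeasure n)

/-- `F_m(t) = λ({ω : 1 - m(ω) ≤ t})`. -/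
def Fcdf {n : ℕ} (m : (Fin n → ℝ) → ℝ) (t : ℝ) : ℝ :=
  ((cubeMeasure n) {ω | 1 - m ω ≤ t}).toReal

/-- The left limit `F_m(t-) = λ({ω : 1 - m(ω) < t})`. -/
def FcdfMinus {n : ℕ} (m : (Fin n → ℝ) → ℝ) (t : ℝ) : ℝ :=
  ((cubeMeasure n) {ω | 1 - m ω < t}).toReal

/-- The generalized inverse (quantile function) `F_m⁻¹(v) = inf{t ∈ [0,1] : F_m(t) ≥ v}`. -/
def Finv {n : ℕ} (m : (Fin n → ℝ) → ℝ) (v : ℝ) : ℝ :=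
  sInf {t | t ∈ Set.Icc (0:ℝ) 1 ∧ v ≤ Fcdf m t}

/-- The function `d_m`. -/
def dFun {n : ℕ} (m : (Fin n → ℝ) → ℝ) (v : ℝ) : ℝ :=
  2 * (∫ u in (0:ℝ)..v, (1 - Finv m u)) / (vol m + v)

/-!
Take `m = 1` on a slab of volume `v²` and `m = v / (1 + v)` elsewhere, so that `‖m‖₁ = v`.
Then `F_m⁻¹` vanishes on `[0, v²]` and equals `1 / (1 + v)` on `(v², 1]`, hence
`∫₀^w (1 - F_m⁻¹) = w` for `w ≤ v²` and `= v (v + w) / (1 + v)` for `w ≥ v²`. Thus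
`d_m(w) = 2w / (v + w)` increases strictly up to `v²` and is the constant `2v / (1 + v)` on
`[v², 1]`.
-/

instance : IsProbabilityMeasure (volume.restrict (Icc (0:ℝ) 1)) :=
  ⟨by simp⟩

lemma cubeMeasure_eq_pi (n : ℕ) :
    cubeMeasure n = Measure.pi fun _ : Fin n => volume.restrict (Icc (0:ℝ) 1) := by
  rw [cubeMeasure, volume_pi, Measure.restrict_pi_pi]

instance (n : ℕ) : IsProbabilityMeasure (cubeMeasure n) := by
  rw [cubeMeasure_eq_pi]; infer_instance

lemma cubeMeasure_coord_lt {n : ℕ} (i : Fin n) {a : ℝ} (ha₁ : a ≤ 1) :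
    cubeMeasure n {ω | ω i < a} = ENNReal.ofReal a := by
  have hmap := (measurePreserving_eval (fun _ : Fin n => volume.restrict (Icc (0:ℝ) 1)) i).map_eq
  rw [cubeMeasure_eq_pi, show {ω : Fin n → ℝ | ω i < a} = Function.eval i ⁻¹' Iio a from rfl,
    ← Measure.map_apply (measurable_pi_apply i) measurableSet_Iio, hmap,
    Measure.restrict_apply measurableSet_Iio]
  have hslab : Iio a ∩ Icc 0 1 = Ico 0 a := by
    ext x
    simp only [mem_inter_iff, mem_Iio, mem_Icc, mem_Ico]
    exact ⟨fun h => ⟨h.2.1, h.1⟩, fun h => ⟨h.2, h.1, h.2.le.trans ha₁⟩⟩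
  rw [hslab, Real.volume_Ico, sub_zero]

lemma intervalIntegrable_of_eqOn_uIoc {f : ℝ → ℝ} {a b c : ℝ}
    (h : EqOn f (fun _ => c) (uIoc a b)) :
    IntervalIntegrable f volume a b :=
  (intervalIntegrable_congr h).2 intervalIntegrable_const

lemma intervalIntegral_eq_of_eqOn_uIoc {f : ℝ → ℝ} {a b c : ℝ}
    (h : EqOn f (fun _ => c) (uIoc a b)) : ∫ x in a..b, f x = (b - a) * c := by
  rw [intervalIntegral.integral_congr_ae (.of_forall h), intervalIntegral.integral_const,
    smul_eq_mul]

def twoLevel {n : ℕ} (i : Fin n) (a b : ℝ) : (Fin n → ℝ) → ℝ :=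
  fun ω => if ω i < a then 1 else b

section TwoLevel

variable {n : ℕ} (i : Fin n) {a b : ℝ}

lemma twoLevel_isMarg (hb₀ : 0 ≤ b) (hb₁ : b ≤ 1) : IsMarg (twoLevel i a b) := by
  refine ⟨Measurable.ite (measurableSet_lt (measurable_pi_apply i) measurable_const)
    measurable_const measurable_const, fun ω => ?_⟩
  unfold twoLevel
  split_ifs
  exacts [⟨zero_le_one, le_rfl⟩, ⟨hb₀, hb₁⟩]

variable (ha₀ : 0 ≤ a) (ha₁ : a ≤ 1)
include ha₀ ha₁

lemma vol_twoLevel : vol (twoLevel i a b) = a + b * (1 - a) := by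
  have hslab : MeasurableSet {ω : Fin n → ℝ | ω i < a} :=
    measurableSet_lt (measurable_pi_apply i) measurable_const
  have hsplit : twoLevel i a b = fun ω => {ω | ω i < a}.indicator (fun _ => 1 - b) ω + b := by
    funext ω
    by_cases h : ω i < a <;> simp [twoLevel, h]
  rw [vol, hsplit, integral_add ((integrable_const _).indicator hslab) (integrable_const _),
    integral_indicator hslab, setIntegral_const, integral_const, measureReal_def,
    cubeMeasure_coord_lt i ha₁, ENNReal.toReal_ofReal ha₀, probReal_univ]
  simp only [smul_eq_mul]
  ring

lemma Fcdf_twoLevel_of_lt {t : ℝ} (ht₀ : 0 ≤ t) (ht : t < 1 - b) :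
    Fcdf (twoLevel i a b) t = a := by
  have : {ω | 1 - twoLevel i a b ω ≤ t} = {ω | ω i < a} := by
    ext ω
    by_cases h : ω i < a <;> simp [twoLevel, h, ht₀]
    linarith
  rw [Fcdf, this, cubeMeasure_coord_lt i ha₁, ENNReal.toReal_ofReal ha₀]

omit ha₀ ha₁ in
lemma Fcdf_twoLevel_of_le (hb₁ : b ≤ 1) {t : ℝ} (ht : 1 - b ≤ t) :
    Fcdf (twoLevel i a b) t = 1 := by
  have : {ω | 1 - twoLevel i a b ω ≤ t} = univ := by
    ext ω
    by_cases h : ω i < a <;> simp [twoLevel, h] <;> linarith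
  rw [Fcdf, this, measure_univ, ENNReal.toReal_one]

lemma Finv_twoLevel_of_le (hb : b < 1) {u : ℝ} (hu : u ≤ a) : Finv (twoLevel i a b) u = 0 := by
  refine IsLeast.csInf_eq ⟨⟨left_mem_Icc.2 zero_le_one, ?_⟩, fun t ht => ht.1.1⟩
  rwa [Fcdf_twoLevel_of_lt i ha₀ ha₁ le_rfl (by linarith)]

lemma Finv_twoLevel_of_lt (hb₀ : 0 ≤ b) (hb₁ : b ≤ 1) {u : ℝ} (hau : a < u) (hu : u ≤ 1) :
    Finv (twoLevel i a b) u = 1 - b := by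
  refine IsLeast.csInf_eq ⟨⟨⟨by linarith, by linarith⟩, ?_⟩, fun t ⟨⟨ht₀, _⟩, hut⟩ => ?_⟩
  · rwa [Fcdf_twoLevel_of_le i hb₁ le_rfl]
  · by_contra! ht
    rw [Fcdf_twoLevel_of_lt i ha₀ ha₁ ht₀ ht] at hut
    linarith

lemma integral_one_sub_Finv_twoLevel_of_le (hb : b < 1) {w : ℝ} (hw₀ : 0 ≤ w) (hw : w ≤ a) :
    ∫ u in (0:ℝ)..w, (1 - Finv (twoLevel i a b) u) = w := by
  rw [intervalIntegral_eq_of_eqOn_uIoc (c := 1)]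
  · ring
  · intro u hu
    rw [uIoc_of_le hw₀] at hu
    simp [Finv_twoLevel_of_le i ha₀ ha₁ hb (hu.2.trans hw)]

lemma integral_one_sub_Finv_twoLevel_of_ge (hb₀ : 0 ≤ b) (hb₁ : b < 1) {w : ℝ} (hw : a ≤ w)
    (hw₁ : w ≤ 1) :
    ∫ u in (0:ℝ)..w, (1 - Finv (twoLevel i a b) u) = a + b * (w - a) := by
  have hslab : EqOn (fun u => 1 - Finv (twoLevel i a b) u) (fun _ => 1) (uIoc 0 a) := by
    intro u hu
    rw [uIoc_of_le ha₀] at hu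
    simp [Finv_twoLevel_of_le i ha₀ ha₁ hb₁ hu.2]
  have hrest : EqOn (fun u => 1 - Finv (twoLevel i a b) u) (fun _ => b) (uIoc a w) := by
    intro u hu
    rw [uIoc_of_le hw] at hu
    simp [Finv_twoLevel_of_lt i ha₀ ha₁ hb₀ hb₁.le hu.1 (hu.2.trans hw₁)]
  rw [← intervalIntegral.integral_add_adjacent_intervals (intervalIntegrable_of_eqOn_uIoc hslab)
    (intervalIntegrable_of_eqOn_uIoc hrest), intervalIntegral_eq_of_eqOn_uIoc hslab,
    intervalIntegral_eq_of_eqOn_uIoc hrest]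
  ring

end TwoLevel

/-- Off the slab `1 - m = 1 / (1 + v) = (1 - v) / (1 - v²)`, the paper's quantile value. -/
def extremalMarg {n : ℕ} (i : Fin n) (v : ℝ) : (Fin n → ℝ) → ℝ :=
  twoLevel i (v ^ 2) (v / (1 + v))

lemma two_mul_div_add_lt {v w : ℝ} (hv : 0 < v) (hw₀ : 0 ≤ w) (hw : w < v ^ 2) :
    2 * w / (v + w) < 2 * v / (1 + v) := by
  rw [div_lt_div_iff₀ (by positivity) (by positivity)]
  nlinarith

lemma two_mul_div_add_le {v w : ℝ} (hv : 0 < v) (hw₀ : 0 ≤ w) (hw : w ≤ v ^ 2) :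
    2 * w / (v + w) ≤ 2 * v / (1 + v) := by
  rw [div_le_div_iff₀ (by positivity) (by positivity)]
  nlinarith

section Extremal

variable {n : ℕ} (i : Fin n) {v : ℝ} (hv₀ : 0 < v) (hv₁ : v ≤ 1)
include hv₀ hv₁

omit hv₁ in
lemma extremalMarg_isMarg : IsMarg (extremalMarg i v) :=
  twoLevel_isMarg i (by positivity) ((div_le_one (by positivity)).2 (by linarith))

lemma vol_extremalMarg : vol (extremalMarg i v) = v := by
  rw [extremalMarg, vol_twoLevel i (by positivity) (by nlinarith)]
  field_simp
  ring

lemma dFun_extremalMarg_of_le {w : ℝ} (hw₀ : 0 ≤ w) (hw : w ≤ v ^ 2) :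
    dFun (extremalMarg i v) w = 2 * w / (v + w) := by
  rw [dFun, vol_extremalMarg i hv₀ hv₁, extremalMarg,
    integral_one_sub_Finv_twoLevel_of_le i (by positivity) (by nlinarith)
      ((div_lt_one (by positivity)).2 (by linarith)) hw₀ hw]

lemma dFun_extremalMarg_of_ge {w : ℝ} (hw : v ^ 2 ≤ w) (hw₁ : w ≤ 1) :
    dFun (extremalMarg i v) w = 2 * v / (1 + v) := by
  have hvw : 0 < v + w := by nlinarith
  rw [dFun, vol_extremalMarg i hv₀ hv₁, extremalMarg,
    integral_one_sub_Finv_twoLevel_of_ge i (by positivity) (by nlinarith) (by positivity)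
      ((div_lt_one (by positivity)).2 (by linarith)) hw hw₁]
  field_simp
  ring

end Extremal

theorem stmt10 {n : ℕ} (hn : 1 ≤ n) :
    ∀ v ∈ Set.Ioc (0:ℝ) 1, ∃ m : (Fin n → ℝ) → ℝ,
      IsMarg m ∧ vol m = v ∧
      {w ∈ Set.Icc (0:ℝ) 1 | ∀ u ∈ Set.Icc (0:ℝ) 1, dFun m u ≤ dFun m w} =
        Set.Icc (v ^ 2) 1 := by
  rintro v ⟨hv₀, hv₁⟩
  let i : Fin n := ⟨0, hn⟩
  have hv₂ : v ^ 2 ≤ 1 := by nlinarith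
  refine ⟨extremalMarg i v, extremalMarg_isMarg i hv₀, vol_extremalMarg i hv₀ hv₁, ?_⟩
  ext w
  constructor
  · rintro ⟨⟨hw₀, hw₁⟩, hmax⟩
    refine ⟨?_, hw₁⟩
    by_contra! hw
    have hle := hmax (v ^ 2) ⟨by positivity, hv₂⟩
    rw [dFun_extremalMarg_of_ge i hv₀ hv₁ le_rfl hv₂, dFun_extremalMarg_of_le i hv₀ hv₁ hw₀ hw.le]
      at hle
    exact hle.not_gt (two_mul_div_add_lt hv₀ hw₀ hw)
  · rintro ⟨hw, hw₁⟩
    refine ⟨⟨(sq_nonneg v).trans hw, hw₁⟩, fun u ⟨hu₀, hu₁⟩ => ?_⟩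
    rw [dFun_extremalMarg_of_ge i hv₀ hv₁ hw hw₁]
    rcases le_or_gt u (v ^ 2) with hu | hu
    · rw [dFun_extremalMarg_of_le i hv₀ hv₁ hu₀ hu]
      exact two_mul_div_add_le hv₀ hu₀ hu
    · rw [dFun_extremalMarg_of_ge i hv₀ hv₁ hu.le hu₁]
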